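/- Theorem 2 (consistency of the estimator of the number of groups): Fix K₀ ≥ 1 and c₀ > 0. For each T ∈ ℕ, let n(T) ≥ K₀ be an integer, let {G₁^{(T)},…,G_{K₀}^{(T)}} be a partition of {1,…,n(T)} into K₀ nonempty groups, let d̂^{(T)} be a random symmetric real array on {1,…,n(T)}² with probability measure P_T, and let h_max(T) > 0 satisfy (log n(T) + log T)/(T·h_max(T)) → 0. Assume: (8) the within-group maximum M_T = max_{1≤k≤K₀} max_{i,j∈G_k^{(T)}, i≠j} d̂^{(T)}_{ij} satisfies: for every ε > 0 there exists C < ∞ with limsup_T P_T( M_T > C·√(log n(T) + log T) ) ≤ ε; (9) the between-group minimum m_T = min_{1≤k<k′≤K₀} min_{i∈G_k^{(T)}, j∈G_{k′}^{(T)}} d̂^{(T)}_{ij} satisfies m_T ≥ c₀·√(T·h_max(T)) + R_T, where R_T/√(T·h_max(T)) → 0 in probability (this hypothesis is vacuous if K₀ = 1); and (10) (π_T) is a deterministic sequence with π_T/√(log n(T) + log T) → ∞ and π_T/√(T·h_max(T)) → 0. Then P_T( K̂₀(d̂^{(T)}, π_T) = K₀ ) → 1 as T → ∞. -/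

import Mathlib

open Finset

/-- Complete-linkage dissimilarity `Δ(S,S') = max_{i ∈ S, j ∈ S'} d i j`, as an
extended real (so that the value over an empty index set is `⊥`). -/
noncomputable def cLink {n : ℕ} (d : Fin n → Fin n → ℝ) (S S' : Finset (Fin n)) : EReal :=
  sSup {x : EReal | ∃ i ∈ S, ∃ j ∈ S', x = (d i j : EReal)}

/-- Within-cluster dissimilarity `Δ(C) = max_{i,j ∈ C, i ≠ j} d i j`, as an extended real;
for a singleton (or empty) cluster the value is `⊥`, which is smaller than every real. -/
noncomputable def cDiam {n : ℕ} (d : Fin n → Fin n → ℝ) (C : Finset (Fin n)) : EReal :=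
  sSup {x : EReal | ∃ i ∈ C, ∃ j ∈ C, i ≠ j ∧ x = (d i j : EReal)}

/-- The initial partition of `{1,…,n}` into `n` singleton clusters. -/
def singletonPartition (n : ℕ) : Finset (Finset (Fin n)) :=
  Finset.univ.image fun i : Fin n => ({i} : Finset (Fin n))

/-- `Q` is obtained from `P` by merging one pair of distinct clusters attaining the
minimum of the complete-linkage dissimilarity `Δ` over all pairs of distinct clusters. -/
def IsMergeStep {n : ℕ} (d : Fin n → Fin n → ℝ) (P Q : Finset (Finset (Fin n))) : Prop :=
  ∃ C ∈ P, ∃ C' ∈ P, C ≠ C' ∧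
    (∀ D ∈ P, ∀ D' ∈ P, D ≠ D' → cLink d C C' ≤ cLink d D D') ∧
    Q = insert (C ∪ C') ((P.erase C).erase C')

/-- A run of the complete-linkage HAC algorithm (with an arbitrary choice of
tie-breaking at each step): `P 0` is the singleton partition and for every
`r < n - 1`, `P (r+1)` is obtained from `P r` by a merge step. -/
def IsHACChain {n : ℕ} (d : Fin n → Fin n → ℝ) (P : ℕ → Finset (Finset (Fin n))) : Prop :=
  P 0 = singletonPartition n ∧ ∀ r, r < n - 1 → IsMergeStep d (P r) (P (r + 1))

/-- `G` is a partition of `{1,…,n}` into `K₀` nonempty groups. -/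
def IsGroupPartition {n K₀ : ℕ} (G : Fin K₀ → Finset (Fin n)) : Prop :=
  (∀ k, (G k).Nonempty) ∧ (∀ i : Fin n, ∃ k, i ∈ G k) ∧
    ∀ k k' : Fin K₀, k ≠ k' → Disjoint (G k) (G k')

/-- The partition `G` is `d`-separated: every within-group distance is strictly smaller
than every between-group distance (vacuously true when `K₀ = 1`). -/
def IsSeparated {n K₀ : ℕ} (d : Fin n → Fin n → ℝ) (G : Fin K₀ → Finset (Fin n)) : Prop :=
  ∀ k : Fin K₀, ∀ i ∈ G k, ∀ j ∈ G k, i ≠ j →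
    ∀ k₁ k₂ : Fin K₀, k₁ ≠ k₂ → ∀ a ∈ G k₁, ∀ b ∈ G k₂, d i j < d a b

/-- `A` is a refinement of `B`: every element of `A` is a subset of some element of `B`. -/
def IsRefinement {n : ℕ} (A B : Finset (Finset (Fin n))) : Prop :=
  ∀ C ∈ A, ∃ D ∈ B, C ⊆ D

/-- The thresholded dendrogram estimator of the number of groups:
`K̂₀(d,π) = min { K ∈ {1,…,n} : every cluster of the HAC partition into K clusters has
within-cluster dissimilarity at most π }`. -/
noncomputable def Khat {n : ℕ} (d : Fin n → Fin n → ℝ)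
    (P : ℕ → Finset (Finset (Fin n))) (π : ℝ) : ℕ :=
  sInf {K : ℕ | 1 ≤ K ∧ K ≤ n ∧ ∀ C ∈ P (n - K), cDiam d C ≤ (π : EReal)}

/-- Maximal within-group distance `max_{k} max_{i,j ∈ G k, i ≠ j} d i j` (real-valued
supremum; by Mathlib's convention it is `0` if there is no within-group pair). -/
noncomputable def withinMax {n K₀ : ℕ} (d : Fin n → Fin n → ℝ)
    (G : Fin K₀ → Finset (Fin n)) : ℝ :=
  sSup {x : ℝ | ∃ k, ∃ i ∈ G k, ∃ j ∈ G k, i ≠ j ∧ x = d i j}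

/-- Minimal between-group distance `min_{k < k'} min_{i ∈ G k, j ∈ G k'} d i j`
(real-valued infimum). -/
noncomputable def betweenMin {n K₀ : ℕ} (d : Fin n → Fin n → ℝ)
    (G : Fin K₀ → Finset (Fin n)) : ℝ :=
  sInf {x : ℝ | ∃ k k' : Fin K₀, k ≠ k' ∧ ∃ i ∈ G k, ∃ j ∈ G k', x = d i j}

/-!
Deterministically, suppose every within-group distance is at most `π` and every between-group
distance exceeds `π`. While more than `K₀` clusters remain, complete-linkage HAC still has two
clusters inside a common group, whose linkage is below every between-group distance, so the
minimizing pair never straddles two groups. Hence the `K₀` clusters are the groups, of diameter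
`≤ π`, while any coarser partition has a cluster meeting two groups, of diameter `> π`: so
`K̂₀ = K₀`. By (8) and `π_T ≫ √(log n + log T)` the first condition fails with vanishing
probability, and by (9) and `π_T ≪ √(T h_max)` so does the second.
-/

def IsClusterPartition {α : Type*} (P : Finset (Finset α)) : Prop :=
  (∀ C ∈ P, C.Nonempty) ∧ (∀ i, ∃ C ∈ P, i ∈ C) ∧
    ∀ C ∈ P, ∀ C' ∈ P, C ≠ C' → Disjoint C C'

namespace IsClusterPartition

variable {α : Type*} [DecidableEq α] {P : Finset (Finset α)} {C C' : Finset α}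

theorem union_notMem_erase_erase (hP : IsClusterPartition P) (hC : C ∈ P) :
    C ∪ C' ∉ (P.erase C).erase C' := by
  intro hmem
  obtain ⟨hCC', hmem⟩ := mem_erase.mp (mem_of_mem_erase hmem)
  obtain ⟨a, ha⟩ := hP.1 C hC
  exact disjoint_left.mp (hP.2.2 _ hmem C hC hCC') (mem_union_left _ ha) ha

theorem card_merge (hP : IsClusterPartition P) (hC : C ∈ P) (hC' : C' ∈ P) (hne : C ≠ C') :
    #(insert (C ∪ C') ((P.erase C).erase C')) + 1 = #P := by
  rw [card_insert_of_notMem (hP.union_notMem_erase_erase hC),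
    card_erase_add_one (mem_erase_of_ne_of_mem hne.symm hC'), card_erase_add_one hC]

theorem merge (hP : IsClusterPartition P) (hC : C ∈ P) (hC' : C' ∈ P) :
    IsClusterPartition (insert (C ∪ C') ((P.erase C).erase C')) := by
  obtain ⟨hnonempty, hcover, hdisj⟩ := hP
  refine ⟨?_, fun i => ?_, ?_⟩
  · simp only [mem_insert, mem_erase]
    rintro D (rfl | ⟨-, -, hD⟩)
    exacts [(hnonempty C hC).mono subset_union_left, hnonempty D hD]
  · obtain ⟨D, hD, hiD⟩ := hcover i
    by_cases hDC : D = C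
    · exact ⟨C ∪ C', mem_insert_self _ _, mem_union_left _ (hDC ▸ hiD)⟩
    by_cases hDC' : D = C'
    · exact ⟨C ∪ C', mem_insert_self _ _, mem_union_right _ (hDC' ▸ hiD)⟩
    exact ⟨D, mem_insert_of_mem <| mem_erase_of_ne_of_mem hDC' <| mem_erase_of_ne_of_mem hDC hD,
      hiD⟩
  · have hunion : ∀ D ∈ P, D ≠ C' → D ≠ C → Disjoint (C ∪ C') D := fun D hD h' h =>
      disjoint_union_left.mpr ⟨hdisj C hC D hD (Ne.symm h), hdisj C' hC' D hD (Ne.symm h')⟩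
    simp only [mem_insert, mem_erase]
    rintro D (rfl | ⟨hD', hD, hDP⟩) E (rfl | ⟨hE', hE, hEP⟩) hDE
    · exact absurd rfl hDE
    · exact hunion E hEP hE' hE
    · exact (hunion D hDP hD' hD).symm
    · exact hdisj D hDP E hEP hDE

end IsClusterPartition

theorem isClusterPartition_singletonPartition (n : ℕ) :
    IsClusterPartition (singletonPartition n) := by
  simp only [IsClusterPartition, singletonPartition, mem_image, mem_univ, true_and]
  refine ⟨?_, fun i => ⟨{i}, ⟨i, rfl⟩, mem_singleton_self i⟩, ?_⟩
  · rintro _ ⟨i, rfl⟩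
    exact singleton_nonempty i
  · rintro _ ⟨i, rfl⟩ _ ⟨j, rfl⟩ hij
    exact disjoint_singleton.mpr fun h => hij (h ▸ rfl)

theorem card_singletonPartition (n : ℕ) : #(singletonPartition n) = n := by
  rw [singletonPartition, card_image_of_injective _ singleton_injective, card_univ,
    Fintype.card_fin]

section HAC

variable {n : ℕ} {d : Fin n → Fin n → ℝ}

theorem IsMergeStep.isClusterPartition_and_card {P Q : Finset (Finset (Fin n))}
    (h : IsMergeStep d P Q) (hP : IsClusterPartition P) : IsClusterPartition Q ∧ #Q + 1 = #P := by
  obtain ⟨C, hC, C', hC', hne, -, rfl⟩ := h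
  exact ⟨hP.merge hC hC', hP.card_merge hC hC' hne⟩

theorem IsHACChain.isClusterPartition_and_card {Q : ℕ → Finset (Finset (Fin n))}
    (hQ : IsHACChain d Q) {r : ℕ} (hr : r ≤ n - 1) :
    IsClusterPartition (Q r) ∧ #(Q r) = n - r := by
  induction r with
  | zero => exact hQ.1 ▸ ⟨isClusterPartition_singletonPartition n, card_singletonPartition n⟩
  | succ r ih =>
    obtain ⟨hpart, hcard⟩ := ih (by omega)
    obtain ⟨hpart', hcard'⟩ := (hQ.2 r (by omega)).isClusterPartition_and_card hpart
    exact ⟨hpart', by omega⟩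

theorem le_cLink {S S' : Finset (Fin n)} {i j : Fin n} (hi : i ∈ S) (hj : j ∈ S') :
    (d i j : EReal) ≤ cLink d S S' :=
  le_sSup ⟨i, hi, j, hj, rfl⟩

theorem cLink_lt {S S' : Finset (Fin n)} (hS : S.Nonempty) (hS' : S'.Nonempty) {x : EReal}
    (h : ∀ i ∈ S, ∀ j ∈ S', (d i j : EReal) < x) : cLink d S S' < x := by
  have hfin : {x : EReal | ∃ i ∈ S, ∃ j ∈ S', x = (d i j : EReal)}.Finite :=
    ((S ×ˢ S').finite_toSet.image fun p => (d p.1 p.2 : EReal)).subset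
      fun _ ⟨i, hi, j, hj, hx⟩ => ⟨(i, j), mem_product.mpr ⟨hi, hj⟩, hx.symm⟩
  obtain ⟨i, hi⟩ := hS
  obtain ⟨j, hj⟩ := hS'
  refine (hfin.csSup_lt_iff ⟨_, i, hi, j, hj, rfl⟩).mpr ?_
  rintro _ ⟨i, hi, j, hj, rfl⟩
  exact h i hi j hj

variable {K₀ : ℕ} {G : Fin K₀ → Finset (Fin n)}

/-- Before `K₀` clusters are left, two clusters of the same group are still available, and
their linkage undercuts every between-group distance; so the minimizing pair never straddles
two groups. -/
theorem IsMergeStep.subset_group {P P' : Finset (Finset (Fin n))} (hstep : IsMergeStep d P P')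
    (hP : IsClusterPartition P) (hsep : IsSeparated d G) (hcard : K₀ < #P)
    (hsub : ∀ C ∈ P, ∃ k, C ⊆ G k) : ∀ C ∈ P', ∃ k, C ⊆ G k := by
  have : Nonempty (Fin K₀) := by
    obtain ⟨C, hC⟩ := card_pos.mp (hcard.trans_le' K₀.zero_le)
    exact ⟨(hsub C hC).choose⟩
  choose! f hf using hsub
  obtain ⟨C, hC, C', hC', -, hmin, rfl⟩ := hstep
  obtain ⟨D, hD, D', hD', hDD', hfD⟩ := exists_ne_map_eq_of_card_lt_of_maps_to
    (t := univ) (by simpa using hcard) fun D _ => mem_coe.mpr (mem_univ (f D))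
  have hsame : f C = f C' := by
    by_contra hdiff
    obtain ⟨a, ha⟩ := hP.1 C hC
    obtain ⟨b, hb⟩ := hP.1 C' hC'
    have hlt : cLink d D D' < d a b := cLink_lt (hP.1 D hD) (hP.1 D' hD') fun i hi j hj =>
      EReal.coe_lt_coe_iff.mpr <| hsep (f D) i (hf D hD hi) j (hfD ▸ hf D' hD' hj)
        (fun hij => disjoint_left.mp (hP.2.2 D hD D' hD' hDD') hi (hij ▸ hj))
        _ _ hdiff a (hf C hC ha) b (hf C' hC' hb)
    exact (le_cLink ha hb).not_gt (lt_of_le_of_lt (hmin D hD D' hD' hDD') hlt)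
  simp only [mem_insert, mem_erase]
  rintro E (rfl | ⟨-, -, hE⟩)
  exacts [⟨f C, union_subset (hf C hC) (hsame ▸ hf C' hC')⟩, ⟨f E, hf E hE⟩]

theorem IsHACChain.subset_group {Q : ℕ → Finset (Finset (Fin n))} (hQ : IsHACChain d Q)
    (hG : IsGroupPartition G) (hsep : IsSeparated d G) (hK₀ : 1 ≤ K₀) {r : ℕ}
    (hr : r ≤ n - K₀) : ∀ C ∈ Q r, ∃ k, C ⊆ G k := by
  induction r with
  | zero =>
    simp only [hQ.1, singletonPartition, mem_image, mem_univ, true_and]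
    rintro _ ⟨i, rfl⟩
    obtain ⟨k, hk⟩ := hG.2.1 i
    exact ⟨k, singleton_subset_iff.mpr hk⟩
  | succ r ih =>
    obtain ⟨hpart, hcard⟩ := hQ.isClusterPartition_and_card (r := r) (by omega)
    exact (hQ.2 r (by omega)).subset_group hpart hsep (by omega) (ih (by omega))

theorem le_cDiam {C : Finset (Fin n)} {i j : Fin n} (hi : i ∈ C) (hj : j ∈ C) (hij : i ≠ j) :
    (d i j : EReal) ≤ cDiam d C :=
  le_sSup ⟨i, hi, j, hj, hij, rfl⟩

theorem cDiam_le {C : Finset (Fin n)} {x : EReal} (h : ∀ i ∈ C, ∀ j ∈ C, i ≠ j → d i j ≤ x) :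
    cDiam d C ≤ x :=
  sSup_le fun _ ⟨i, hi, j, hj, hij, hx⟩ => hx ▸ h i hi j hj hij

variable {π : ℝ}

/-- Pigeonhole: with fewer clusters than groups, some cluster contains points of two groups. -/
theorem IsClusterPartition.exists_lt_cDiam {P : Finset (Finset (Fin n))}
    (hP : IsClusterPartition P) (hG : IsGroupPartition G) (hcard : #P < K₀)
    (hB : ∀ k k', k ≠ k' → ∀ a ∈ G k, ∀ b ∈ G k', π < d a b) :
    ∃ C ∈ P, (π : EReal) < cDiam d C := by
  choose g hg using hG.1
  choose cl hcl hgcl using fun k => hP.2.1 (g k)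
  obtain ⟨k, -, k', -, hkk', hclk⟩ := exists_ne_map_eq_of_card_lt_of_maps_to
    (s := univ) (by simpa using hcard) fun k _ => mem_coe.mpr (hcl k)
  have hgg : g k ≠ g k' := fun h => disjoint_left.mp (hG.2.2 k k' hkk') (hg k) (h ▸ hg k')
  refine ⟨cl k, hcl k, lt_of_lt_of_le ?_ (le_cDiam (hgcl k) (hclk ▸ hgcl k') hgg)⟩
  exact EReal.coe_lt_coe_iff.mpr (hB k k' hkk' _ (hg k) _ (hg k'))

theorem IsHACChain.khat_eq {Q : ℕ → Finset (Finset (Fin n))} (hQ : IsHACChain d Q)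
    (hG : IsGroupPartition G) (hK₀ : 1 ≤ K₀) (hn : K₀ ≤ n)
    (hW : ∀ k, ∀ i ∈ G k, ∀ j ∈ G k, i ≠ j → d i j ≤ π)
    (hB : ∀ k k', k ≠ k' → ∀ a ∈ G k, ∀ b ∈ G k', π < d a b) :
    Khat d Q π = K₀ := by
  have hsep : IsSeparated d G := fun k i hi j hj hij _ _ hk a ha b hb =>
    (hW k i hi j hj hij).trans_lt (hB _ _ hk a ha b hb)
  have hmem : K₀ ∈ {K | 1 ≤ K ∧ K ≤ n ∧ ∀ C ∈ Q (n - K), cDiam d C ≤ (π : EReal)} := by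
    refine ⟨hK₀, hn, fun C hC => ?_⟩
    obtain ⟨k, hk⟩ := hQ.subset_group hG hsep hK₀ le_rfl C hC
    exact cDiam_le fun i hi j hj hij => EReal.coe_le_coe_iff.mpr (hW k i (hk hi) j (hk hj) hij)
  refine le_antisymm (Nat.sInf_le hmem) (le_csInf ⟨K₀, hmem⟩ ?_)
  rintro K ⟨hK1, hKn, hdiam⟩
  by_contra! hlt
  obtain ⟨hpart, hcard⟩ := hQ.isClusterPartition_and_card (r := n - K) (by omega)
  obtain ⟨C, hC, hπC⟩ := hpart.exists_lt_cDiam hG (by omega) hB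
  exact (hdiam C hC).not_gt hπC

theorem le_withinMax {k : Fin K₀} {i j : Fin n} (hi : i ∈ G k) (hj : j ∈ G k) (hij : i ≠ j) :
    d i j ≤ withinMax d G := by
  refine le_csSup ((Set.finite_range fun p : Fin n × Fin n => d p.1 p.2).subset ?_).bddAbove
    ⟨k, i, hi, j, hj, hij, rfl⟩
  rintro _ ⟨k, i, -, j, -, -, rfl⟩
  exact ⟨(i, j), rfl⟩

theorem betweenMin_le {k k' : Fin K₀} (hkk' : k ≠ k') {i j : Fin n} (hi : i ∈ G k)
    (hj : j ∈ G k') : betweenMin d G ≤ d i j := by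
  refine csInf_le ((Set.finite_range fun p : Fin n × Fin n => d p.1 p.2).subset ?_).bddBelow
    ⟨k, k', hkk', i, hi, j, hj, rfl⟩
  rintro _ ⟨k, k', -, i, -, j, -, rfl⟩
  exact ⟨(i, j), rfl⟩

/-- The condition on `betweenMin` is guarded by `1 < K₀` since for a single group it is the
junk value `sInf ∅ = 0`. -/
theorem IsHACChain.khat_eq_of_withinMax_le {Q : ℕ → Finset (Finset (Fin n))}
    (hQ : IsHACChain d Q) (hG : IsGroupPartition G) (hK₀ : 1 ≤ K₀) (hn : K₀ ≤ n)
    (hW : withinMax d G ≤ π) (hB : 1 < K₀ → π < betweenMin d G) : Khat d Q π = K₀ :=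
  hQ.khat_eq hG hK₀ hn (fun _ _ hi _ hj hij => (le_withinMax hi hj hij).trans hW)
    fun k k' hkk' _ ha _ hb =>
      (hB (Fin.nontrivial_iff_two_le.mp (nontrivial_of_ne k k' hkk'))).trans_le
        (betweenMin_le hkk' ha hb)

end HAC

open MeasureTheory Filter
open scoped Topology ENNReal

theorem tendsto_nhds_zero_of_limsup_le_ofReal {ι : Type*} {l : Filter ι} {u : ι → ℝ≥0∞}
    (h : ∀ ε : ℝ, 0 < ε → limsup u l ≤ ENNReal.ofReal ε) : Tendsto u l (𝓝 0) := by
  refine tendsto_of_le_liminf_of_limsup_le bot_le (ENNReal.le_of_forall_pos_le_add ?_)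
  intro ε hε _
  simpa using h ε hε

section Probability

variable {ι : Type*} {l : Filter ι} {Ω : ι → Type*} [∀ T, MeasurableSpace (Ω T)]
  {μ : ∀ T, Measure (Ω T)}

theorem tendsto_measure_lt_of_tight {X : ∀ T, Ω T → ℝ} {s π : ι → ℝ} (hs : ∀ T, 0 ≤ s T)
    (hX : ∀ ε : ℝ, 0 < ε → ∃ C : ℝ,
      limsup (fun T => μ T {ω | C * s T < X T ω}) l ≤ ENNReal.ofReal ε)
    (hπ : Tendsto (fun T => π T / s T) l atTop) :
    Tendsto (fun T => μ T {ω | π T < X T ω}) l (𝓝 0) := by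
  refine tendsto_nhds_zero_of_limsup_le_ofReal fun ε hε => ?_
  obtain ⟨C, hC⟩ := hX ε hε
  refine (limsup_le_limsup ?_).trans hC
  filter_upwards [hπ.eventually_gt_atTop (max C 0)] with T hT
  have hsT : 0 < s T := (hs T).lt_of_ne fun h => by simp [← h] at hT
  have hCπ : C * s T < π T := (lt_div_iff₀ hsT).mp ((le_max_left C 0).trans_lt hT)
  exact measure_mono fun ω (hω : π T < X T ω) => hCπ.trans hω

theorem tendsto_measure_le_of_le_add {Y R : ∀ T, Ω T → ℝ} {s π : ι → ℝ} {c : ℝ} (hc : 0 < c)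
    (hs : ∀ᶠ T in l, 0 < s T) (hY : ∀ T ω, c * s T + R T ω ≤ Y T ω)
    (hR : ∀ ε : ℝ, 0 < ε → Tendsto (fun T => μ T {ω | ε * s T < |R T ω|}) l (𝓝 0))
    (hπ : Tendsto (fun T => π T / s T) l (𝓝 0)) :
    Tendsto (fun T => μ T {ω | Y T ω ≤ π T}) l (𝓝 0) := by
  refine tendsto_of_tendsto_of_tendsto_of_le_of_le' tendsto_const_nhds (hR (c / 2) (half_pos hc))
    (Eventually.of_forall fun _ => zero_le) ?_
  filter_upwards [hs, hπ.eventually_lt_const (half_pos hc)] with T hsT hT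
  have hπs : π T < c / 2 * s T := (div_lt_iff₀ hsT).mp hT
  refine measure_mono fun ω (hω : Y T ω ≤ π T) => ?_
  show c / 2 * s T < |R T ω|
  linarith [hY T ω, neg_abs_le (R T ω)]

theorem tendsto_measure_nhds_one_of_notMem_union [∀ T, IsProbabilityMeasure (μ T)]
    {E A B : ∀ T, Set (Ω T)} (hE : ∀ T ω, ω ∉ A T → ω ∉ B T → ω ∈ E T)
    (hA : Tendsto (fun T => μ T (A T)) l (𝓝 0)) (hB : Tendsto (fun T => μ T (B T)) l (𝓝 0)) :
    Tendsto (fun T => μ T (E T)) l (𝓝 1) := by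
  have hlower : ∀ T, 1 - (μ T (A T) + μ T (B T)) ≤ μ T (E T) := fun T => by
    refine tsub_le_iff_right.mpr ?_
    calc (1 : ℝ≥0∞) = μ T Set.univ := measure_univ.symm
      _ ≤ μ T (E T ∪ (A T ∪ B T)) := measure_mono fun ω _ => by
          by_cases hωA : ω ∈ A T <;> by_cases hωB : ω ∈ B T <;> simp_all
      _ ≤ μ T (E T) + (μ T (A T) + μ T (B T)) :=
          (measure_union_le _ _).trans (add_le_add le_rfl (measure_union_le _ _))
  have hlim : Tendsto (fun T => 1 - (μ T (A T) + μ T (B T))) l (𝓝 1) := by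
    simpa using
      ENNReal.Tendsto.sub (tendsto_const_nhds (x := 1)) (hA.add hB) (Or.inl ENNReal.one_ne_top)
  exact tendsto_of_tendsto_of_tendsto_of_le_of_le hlim tendsto_const_nhds hlower
    fun T => prob_le_one

end Probability

theorem theorem2_consistency_of_Khat_general {K₀ : ℕ} (hK₀ : 1 ≤ K₀) (c₀ : ℝ) (hc₀ : 0 < c₀)
    (n : ℕ → ℕ) (hn : ∀ T, K₀ ≤ n T)
    (Ω : ℕ → Type*) [∀ T, MeasurableSpace (Ω T)]
    (μ : ∀ T, Measure (Ω T)) [∀ T, IsProbabilityMeasure (μ T)]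
    (dh : ∀ T, Ω T → Fin (n T) → Fin (n T) → ℝ)
    (G : ∀ T, Fin K₀ → Finset (Fin (n T)))
    (hG : ∀ T, IsGroupPartition (G T))
    (hmax : ℕ → ℝ) (hhmax : ∀ T, 0 < hmax T)
    -- property (8): the within-group maximum is O_p(√(log n + log T))
    (h8 : ∀ ε : ℝ, 0 < ε → ∃ C : ℝ,
      Filter.limsup
        (fun T => μ T {ω |
          C * Real.sqrt (Real.log (n T) + Real.log (T : ℝ)) < withinMax (dh T ω) (G T)})
        atTop ≤ ENNReal.ofReal ε)
    -- property (9): the between-group minimum is ≥ c₀·√(T·h_max) + o_p(√(T·h_max))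
    (h9 : 1 < K₀ → ∃ R : ∀ T, Ω T → ℝ,
      (∀ (T : ℕ) (ω : Ω T), c₀ * Real.sqrt ((T : ℝ) * hmax T) + R T ω ≤ betweenMin (dh T ω) (G T)) ∧
        ∀ ε : ℝ, 0 < ε →
          Tendsto (fun T => μ T {ω | ε * Real.sqrt ((T : ℝ) * hmax T) < |R T ω|})
            atTop (nhds 0))
    -- property (10): √(log n + log T) ≪ π_T ≪ √(T·h_max)
    (π : ℕ → ℝ)
    (hπ1 : Tendsto
      (fun T => π T / Real.sqrt (Real.log (n T) + Real.log (T : ℝ))) atTop atTop)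
    (hπ2 : Tendsto
      (fun T => π T / Real.sqrt ((T : ℝ) * hmax T)) atTop (nhds 0)) :
    Tendsto
      (fun T => μ T {ω | ∀ Q, IsHACChain (dh T ω) Q → Khat (dh T ω) Q (π T) = K₀})
      atTop (nhds (1 : ENNReal)) := by
  have hwithin := tendsto_measure_lt_of_tight (fun T => Real.sqrt_nonneg _) h8 hπ1
  have hbetween : Tendsto
      (fun T => μ T {ω | 1 < K₀ ∧ betweenMin (dh T ω) (G T) ≤ π T}) atTop (𝓝 0) := by
    by_cases hK : 1 < K₀
    · obtain ⟨R, hR, hRsmall⟩ := h9 hK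
      have hscale : ∀ᶠ T : ℕ in atTop, 0 < Real.sqrt ((T : ℝ) * hmax T) :=
        (eventually_gt_atTop 0).mono fun T hT =>
          Real.sqrt_pos.mpr (mul_pos (Nat.cast_pos.mpr hT) (hhmax T))
      simpa only [hK, true_and] using tendsto_measure_le_of_le_add hc₀ hscale hR hRsmall hπ2
    · simp [hK]
  refine tendsto_measure_nhds_one_of_notMem_union (fun T ω hW hB Q hQ => ?_) hwithin hbetween
  exact hQ.khat_eq_of_withinMax_le (hG T) hK₀ (hn T) (not_lt.mp hW)
    fun hK => not_le.mp fun h => hB ⟨hK, h⟩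

/-- **Theorem 2 (consistency of the estimator of the number of groups).** Under the
within-group bound (8), the between-group bound (9) (vacuous when `K₀ = 1`) and the
threshold condition (10), the thresholded dendrogram estimator satisfies
`P_T(K̂₀ = K₀) → 1`, for every run (tie-breaking) of the complete-linkage HAC algorithm. -/
theorem theorem2_consistency_of_Khat {K₀ : ℕ} (hK₀ : 1 ≤ K₀) (c₀ : ℝ) (hc₀ : 0 < c₀)
    (n : ℕ → ℕ) (hn : ∀ T, K₀ ≤ n T)
    (Ω : ℕ → Type*) [∀ T, MeasurableSpace (Ω T)]
    (μ : ∀ T, Measure (Ω T)) [∀ T, IsProbabilityMeasure (μ T)]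
    (dh : ∀ T, Ω T → Fin (n T) → Fin (n T) → ℝ)
    (hsym : ∀ T ω i j, dh T ω i j = dh T ω j i)
    (G : ∀ T, Fin K₀ → Finset (Fin (n T)))
    (hG : ∀ T, IsGroupPartition (G T))
    (hmax : ℕ → ℝ) (hhmax : ∀ T, 0 < hmax T)
    (hratio : Tendsto
      (fun T : ℕ => (Real.log (n T) + Real.log (T : ℝ)) / ((T : ℝ) * hmax T))
      atTop (nhds 0))
    -- property (8): the within-group maximum is O_p(√(log n + log T))
    (h8 : ∀ ε : ℝ, 0 < ε → ∃ C : ℝ,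
      Filter.limsup
        (fun T => μ T {ω |
          C * Real.sqrt (Real.log (n T) + Real.log (T : ℝ)) < withinMax (dh T ω) (G T)})
        atTop ≤ ENNReal.ofReal ε)
    -- property (9): the between-group minimum is ≥ c₀·√(T·h_max) + o_p(√(T·h_max))
    (h9 : 1 < K₀ → ∃ R : ∀ T, Ω T → ℝ,
      (∀ (T : ℕ) (ω : Ω T), c₀ * Real.sqrt ((T : ℝ) * hmax T) + R T ω ≤ betweenMin (dh T ω) (G T)) ∧
        ∀ ε : ℝ, 0 < ε →
          Tendsto (fun T => μ T {ω | ε * Real.sqrt ((T : ℝ) * hmax T) < |R T ω|})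
            atTop (nhds 0))
    -- property (10): √(log n + log T) ≪ π_T ≪ √(T·h_max)
    (π : ℕ → ℝ)
    (hπ1 : Tendsto
      (fun T => π T / Real.sqrt (Real.log (n T) + Real.log (T : ℝ))) atTop atTop)
    (hπ2 : Tendsto
      (fun T => π T / Real.sqrt ((T : ℝ) * hmax T)) atTop (nhds 0)) :
    Tendsto
      (fun T => μ T {ω | ∀ Q, IsHACChain (dh T ω) Q → Khat (dh T ω) Q (π T) = K₀})
      atTop (nhds (1 : ENNReal)) :=
  theorem2_consistency_of_Khat_general hK₀ c₀ hc₀ n hn Ω μ dh G hG hmax hhmax h8 h9 π hπ1 hπ2
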